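/- Let $d\geq 3$, $1\leq k\leq d-1$, $r_2=\left(\frac{d-k}{d}\right)^{1/k}$, and for $r_0>r_2$ define $\mu(r_0)=r_0^2\Big[-\frac12+\int_1^\infty \tau\big((1+(r_0^{-k}-1)\tau^{-d})^{1/k}-1\big)d\tau\Big]$. Then $\mu$ is strictly decreasing on $(r_2,\infty)$, $\mu(r_0)\to-\infty$ as $r_0\to\infty$, and hence $\mu(r_0)<\mu(r_2)=\left(\frac{d-k}{d}\right)^{2/k}\Big[-\frac12+\int_1^\infty\tau\big((1+\frac{k}{d-k}\tau^{-d})^{1/k}-1\big)d\tau\Big]$ for all $r_0>r_2$. -/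

import Mathlib

/-!
Integrating by parts against `τ ↦ τ ^ 2 / 2` turns the defining integral into
`μ r = -r / 2 + (d / 2k) ∫₁^∞ τ ^ (1 - d) K (τ ^ (-d)) (r ^ k) dτ`, where
`K t x = x ^ (1/k) (1 - x) (x + (1 - x) t) ^ (1/k - 1)` (`ibpKernel`). The derivative of
`K t` in `x` is a positive factor times an affine function of `t`, and for `x ≥ (d - k)/d`
this affine function is nonpositive at both `t = 0` and `t = 1`. Hence every `K t` is
nonincreasing there, and `μ` is the strictly decreasing `-r/2` plus a nonincreasing
function on `[r₂, ∞)`; in particular `μ r ≤ -r/2 + const → -∞`.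
-/

open MeasureTheory Set Filter Topology

namespace Real

lemma abs_one_add_rpow_sub_one_le {y p : ℝ} (hy : -1 < y) (hp0 : 0 ≤ p) (hp1 : p ≤ 1) :
    |(1 + y) ^ p - 1| ≤ |y| := by
  have hbase : 0 < 1 + y := by linarith
  rw [abs_sub_le_iff]
  constructor
  · have := rpow_one_add_le_one_add_mul_self hy.le hp0 hp1
    nlinarith [le_abs_self y, neg_abs_le y, abs_nonneg y]
  · rcases le_total 0 y with hy0 | hy0
    · linarith [one_le_rpow (by linarith : (1 : ℝ) ≤ 1 + y) hp0, le_abs_self y]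
    · have := rpow_le_rpow_of_exponent_ge hbase (by linarith) hp1
      rw [rpow_one] at this
      linarith [neg_abs_le y]

end Real

lemma min_one_le_one_add_mul {c t : ℝ} (ht0 : 0 ≤ t) (ht1 : t ≤ 1) :
    min 1 (1 + c) ≤ 1 + c * t := by
  rcases le_total 0 c with hc | hc
  · exact min_le_of_left_le (by nlinarith)
  · exact min_le_of_right_le (by nlinarith)

section IntegrationByParts

variable {c d p τ : ℝ}

lemma rpow_neg_mem_Ioc (hd : 0 ≤ d) (hτ : 1 ≤ τ) : τ ^ (-d) ∈ Ioc 0 1 :=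
  ⟨Real.rpow_pos_of_pos (by linarith) _, Real.rpow_le_one_of_one_le_of_nonpos hτ (by linarith)⟩

lemma one_add_mul_rpow_neg_pos (hd : 0 ≤ d) (hc : -1 < c) (hτ : 1 ≤ τ) :
    0 < 1 + c * τ ^ (-d) := by
  obtain ⟨h0, h1⟩ := rpow_neg_mem_Ioc hd hτ
  exact (lt_min one_pos (by linarith)).trans_le (min_one_le_one_add_mul h0.le h1)

lemma abs_one_add_mul_rpow_neg_rpow_sub_one_le (hd : 0 ≤ d) (hc : -1 < c) (hp0 : 0 ≤ p)
    (hp1 : p ≤ 1) (hτ : 1 ≤ τ) :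
    |(1 + c * τ ^ (-d)) ^ p - 1| ≤ |c| * τ ^ (-d) := by
  have hpos := one_add_mul_rpow_neg_pos hd hc hτ
  calc |(1 + c * τ ^ (-d)) ^ p - 1| ≤ |c * τ ^ (-d)| :=
        Real.abs_one_add_rpow_sub_one_le (by linarith) hp0 hp1
    _ = |c| * τ ^ (-d) := by rw [abs_mul, abs_of_pos (rpow_neg_mem_Ioc hd hτ).1]

lemma integrableOn_mul_one_add_mul_rpow_neg_rpow_sub_one (hd : 2 < d) (hc : -1 < c)
    (hp0 : 0 ≤ p) (hp1 : p ≤ 1) :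
    IntegrableOn (fun τ ↦ τ * ((1 + c * τ ^ (-d)) ^ p - 1)) (Ioi 1) := by
  refine ((integrableOn_Ioi_rpow_of_lt (by linarith : 1 - d < -1) one_pos).const_mul |c|).mono'
    (by fun_prop) ((ae_restrict_mem measurableSet_Ioi).mono fun τ (hτ : 1 < τ) ↦ ?_)
  have hτ0 : 0 < τ := by linarith
  have hsplit : τ ^ (1 - d) = τ * τ ^ (-d) := by
    rw [sub_eq_add_neg, Real.rpow_add hτ0, Real.rpow_one]
  rw [Real.norm_eq_abs, abs_mul, abs_of_pos hτ0, hsplit]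
  have := abs_one_add_mul_rpow_neg_rpow_sub_one_le (d := d) (by linarith) hc hp0 hp1 hτ.le
  nlinarith

lemma integrableOn_rpow_one_sub_mul_one_add_mul_rpow_neg_rpow (hd : 2 < d) (hc : -1 < c)
    {q : ℝ} (hq : q ≤ 0) :
    IntegrableOn (fun τ ↦ τ ^ (1 - d) * (1 + c * τ ^ (-d)) ^ q) (Ioi 1) := by
  refine ((integrableOn_Ioi_rpow_of_lt (by linarith : 1 - d < -1) one_pos).mul_const
    (min 1 (1 + c) ^ q)).mono' (by fun_prop) ((ae_restrict_mem measurableSet_Ioi).mono fun τ (hτ : 1 < τ) ↦ ?_)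
  obtain ⟨ht0, ht1⟩ := rpow_neg_mem_Ioc (by linarith : 0 ≤ d) hτ.le
  have hpos := one_add_mul_rpow_neg_pos (d := d) (by linarith) hc hτ.le
  rw [Real.norm_eq_abs, abs_mul, abs_of_pos (Real.rpow_pos_of_pos (by linarith) _),
    abs_of_pos (Real.rpow_pos_of_pos hpos _)]
  exact mul_le_mul_of_nonneg_left (Real.rpow_le_rpow_of_nonpos (lt_min one_pos (by linarith))
    (min_one_le_one_add_mul ht0.le ht1) hq) (by positivity)

lemma tendsto_sq_div_two_mul_one_add_mul_rpow_neg_rpow_sub_one (hd : 2 < d) (hc : -1 < c)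
    (hp0 : 0 ≤ p) (hp1 : p ≤ 1) :
    Tendsto (fun τ ↦ τ ^ 2 / 2 * ((1 + c * τ ^ (-d)) ^ p - 1)) atTop (𝓝 0) := by
  have hdecay : Tendsto (fun τ : ℝ ↦ |c| / 2 * τ ^ (2 - d)) atTop (𝓝 0) := by
    simpa [← Real.rpow_neg_eq_inv_rpow] using
      (tendsto_rpow_neg_atTop (by linarith : 0 < d - 2)).const_mul (|c| / 2)
  refine squeeze_zero_norm' ((eventually_ge_atTop 1).mono fun τ hτ ↦ ?_) hdecay
  have hτ0 : 0 < τ := by linarith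
  have hsplit : τ ^ (2 - d) = τ ^ 2 * τ ^ (-d) := by
    rw [sub_eq_add_neg, Real.rpow_add hτ0, Real.rpow_two]
  rw [Real.norm_eq_abs, abs_mul, abs_of_nonneg (by positivity), hsplit]
  have := abs_one_add_mul_rpow_neg_rpow_sub_one_le (d := d) (by linarith) hc hp0 hp1 hτ
  calc τ ^ 2 / 2 * |(1 + c * τ ^ (-d)) ^ p - 1| ≤ τ ^ 2 / 2 * (|c| * τ ^ (-d)) := by gcongr
    _ = _ := by ring

lemma hasDerivAt_sq_div_two_mul_one_add_mul_rpow_neg_rpow_sub_one (hd : 0 ≤ d) (hc : -1 < c)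
    (hτ : 1 ≤ τ) :
    HasDerivAt (fun τ ↦ τ ^ 2 / 2 * ((1 + c * τ ^ (-d)) ^ p - 1))
      (τ * ((1 + c * τ ^ (-d)) ^ p - 1) -
        c * d * p / 2 * (τ ^ (1 - d) * (1 + c * τ ^ (-d)) ^ (p - 1))) τ := by
  have hτ0 : 0 < τ := by linarith
  have hbase := ((Real.hasDerivAt_rpow_const (p := -d) (Or.inl hτ0.ne')).const_mul c).const_add 1
  have hpow := (hbase.rpow_const (p := p) (Or.inl (one_add_mul_rpow_neg_pos hd hc hτ).ne'))
  refine (((hasDerivAt_pow 2 τ).div_const 2).mul (hpow.sub_const 1)).congr_deriv ?_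
  rw [show (1 : ℝ) - d = 2 + (-d - 1) by ring, Real.rpow_add hτ0, Real.rpow_two]
  push_cast
  ring

lemma integral_mul_one_add_mul_rpow_neg_rpow_sub_one (hd : 2 < d) (hc : -1 < c) (hp0 : 0 ≤ p)
    (hp1 : p ≤ 1) :
    ∫ τ in Ioi 1, τ * ((1 + c * τ ^ (-d)) ^ p - 1) =
      (1 - (1 + c) ^ p) / 2 +
        c * d * p / 2 * ∫ τ in Ioi 1, τ ^ (1 - d) * (1 + c * τ ^ (-d)) ^ (p - 1) := by
  have hI := integrableOn_mul_one_add_mul_rpow_neg_rpow_sub_one hd hc hp0 hp1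
  have hJ := (integrableOn_rpow_one_sub_mul_one_add_mul_rpow_neg_rpow hd hc
    (by linarith : p - 1 ≤ 0)).const_mul (c * d * p / 2)
  have hFTC := integral_Ioi_of_hasDerivAt_of_tendsto'
    (fun τ hτ ↦ hasDerivAt_sq_div_two_mul_one_add_mul_rpow_neg_rpow_sub_one (p := p)
      (by linarith) hc (mem_Ici.mp hτ)) (hI.sub hJ)
    (tendsto_sq_div_two_mul_one_add_mul_rpow_neg_rpow_sub_one hd hc hp0 hp1)
  rw [integral_sub hI hJ, integral_const_mul] at hFTC
  simp only [Real.one_rpow, mul_one, one_pow] at hFTC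
  linarith

end IntegrationByParts

lemma add_one_sub_mul_pos {x t : ℝ} (hx : 0 < x) (ht0 : 0 ≤ t) (ht1 : t ≤ 1) :
    0 < x + (1 - x) * t := by
  rcases ht0.eq_or_lt with rfl | ht0
  · simpa using hx
  · nlinarith

noncomputable def ibpKernel (p t x : ℝ) : ℝ := x ^ p * (1 - x) * (x + (1 - x) * t) ^ (p - 1)

section Kernel

variable {d p t x x₀ : ℝ}

lemma sq_rpow_mul_inv_sub_one_mul_rpow_eq_ibpKernel (hx : 0 < x) (hE : 0 ≤ x + (1 - x) * t) :
    (x ^ p) ^ 2 * ((x⁻¹ - 1) * (1 + (x⁻¹ - 1) * t) ^ (p - 1)) = ibpKernel p t x := by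
  have hfactor : 1 + (x⁻¹ - 1) * t = x⁻¹ * (x + (1 - x) * t) := by field_simp
  rw [hfactor, Real.mul_rpow (inv_nonneg.2 hx.le) hE, Real.inv_rpow hx.le,
    Real.rpow_sub_one hx.ne', ibpKernel]
  field_simp

lemma hasDerivAt_ibpKernel (hx : 0 < x) (hE : 0 < x + (1 - x) * t) :
    HasDerivAt (ibpKernel p t)
      (x ^ (p - 1) * (x + (1 - x) * t) ^ (p - 2) *
        (t * (p * (1 - x) - x) + (1 - t) * (x * (2 * p * (1 - x) - 1)))) x := by
  have hpow := Real.hasDerivAt_rpow_const (p := p) (Or.inl hx.ne')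
  have hlin : HasDerivAt (fun y ↦ y + (1 - y) * t) (1 - t) x :=
    ((hasDerivAt_id' x).add (((hasDerivAt_id' x).const_sub 1).mul_const t)).congr_deriv (by ring)
  refine ((hpow.mul ((hasDerivAt_id' x).const_sub 1)).mul
    (hlin.rpow_const (p := p - 1) (Or.inl hE.ne'))).congr_deriv ?_
  have hxp : x ^ p = x ^ (p - 1) * x := by rw [Real.rpow_sub_one hx.ne', div_mul_cancel₀ _ hx.ne']
  have hEp : (x + (1 - x) * t) ^ (p - 1) = (x + (1 - x) * t) ^ (p - 2) * (x + (1 - x) * t) := by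
    rw [show p - 2 = p - 1 - 1 by ring, Real.rpow_sub_one hE.ne' (p - 1), div_mul_cancel₀ _ hE.ne']
  simp only [Pi.mul_apply]
  rw [show p - 1 - 1 = p - 2 by ring, hxp, hEp]
  ring

lemma antitoneOn_ibpKernel (hp : 0 < p) (ht0 : 0 ≤ t) (ht1 : t ≤ 1) (h₁ : p * (1 - x₀) ≤ x₀)
    (h₂ : 2 * p * (1 - x₀) ≤ 1) : AntitoneOn (ibpKernel p t) (Ici x₀) := by
  have hx₀ : 0 < x₀ := by nlinarith
  have hderiv : ∀ x ∈ Ici x₀, HasDerivAt (ibpKernel p t) _ x := fun x hx ↦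
    hasDerivAt_ibpKernel (hx₀.trans_le hx) (add_one_sub_mul_pos (hx₀.trans_le hx) ht0 ht1)
  refine antitoneOn_of_deriv_nonpos (convex_Ici x₀)
    (fun x hx ↦ (hderiv x hx).continuousAt.continuousWithinAt)
    (fun x hx ↦ (hderiv x (interior_subset hx)).differentiableAt.differentiableWithinAt)
    (fun x hx ↦ ?_)
  rw [interior_Ici, mem_Ioi] at hx
  have hx0 : 0 < x := hx₀.trans hx
  rw [(hderiv x hx.le).deriv]
  have hE := add_one_sub_mul_pos hx0 ht0 ht1
  refine mul_nonpos_of_nonneg_of_nonpos (by positivity) (add_nonpos ?_ ?_)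
  · exact mul_nonpos_of_nonneg_of_nonpos ht0 (by nlinarith)
  · exact mul_nonpos_of_nonneg_of_nonpos (by linarith)
      (mul_nonpos_of_nonneg_of_nonpos hx0.le (by nlinarith))

lemma integrableOn_rpow_one_sub_mul_ibpKernel (hd : 2 < d) (hp : p ≤ 1) (hx : 0 < x) :
    IntegrableOn (fun τ ↦ τ ^ (1 - d) * ibpKernel p (τ ^ (-d)) x) (Ioi 1) := by
  refine IntegrableOn.congr_fun ((integrableOn_rpow_one_sub_mul_one_add_mul_rpow_neg_rpow hd
    (by linarith [inv_pos.2 hx] : -1 < x⁻¹ - 1) (by linarith : p - 1 ≤ 0)).const_mul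
    ((x ^ p) ^ 2 * (x⁻¹ - 1))) (fun τ (hτ : 1 < τ) ↦ ?_) measurableSet_Ioi
  obtain ⟨ht0, ht1⟩ := rpow_neg_mem_Ioc (d := d) (by linarith) hτ.le
  rw [← sq_rpow_mul_inv_sub_one_mul_rpow_eq_ibpKernel hx (add_one_sub_mul_pos hx ht0.le ht1).le]
  ring

lemma antitoneOn_integral_rpow_one_sub_mul_ibpKernel (hd : 2 < d) (hp0 : 0 < p) (hp1 : p ≤ 1)
    (h₁ : p * (1 - x₀) ≤ x₀) (h₂ : 2 * p * (1 - x₀) ≤ 1) :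
    AntitoneOn (fun x ↦ ∫ τ in Ioi 1, τ ^ (1 - d) * ibpKernel p (τ ^ (-d)) x) (Ici x₀) := by
  have hx₀ : 0 < x₀ := by nlinarith
  intro x hx y hy hxy
  refine setIntegral_mono_on (integrableOn_rpow_one_sub_mul_ibpKernel hd hp1 (hx₀.trans_le hy))
    (integrableOn_rpow_one_sub_mul_ibpKernel hd hp1 (hx₀.trans_le hx)) measurableSet_Ioi
    fun τ (hτ : 1 < τ) ↦ ?_
  obtain ⟨ht0, ht1⟩ := rpow_neg_mem_Ioc (d := d) (by linarith) hτ.le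
  exact mul_le_mul_of_nonneg_left (antitoneOn_ibpKernel hp0 ht0.le ht1 h₁ h₂ hx hy hxy)
    (Real.rpow_nonneg (by linarith) _)

lemma sq_rpow_mul_neg_half_add_integral_eq (hd : 2 < d) (hp0 : 0 ≤ p) (hp1 : p ≤ 1)
    (hx : 0 < x) :
    (x ^ p) ^ 2 * (-(1 / 2) + ∫ τ in Ioi 1, τ * ((1 + (x⁻¹ - 1) * τ ^ (-d)) ^ p - 1)) =
      -(x ^ p / 2) + d * p / 2 * ∫ τ in Ioi 1, τ ^ (1 - d) * ibpKernel p (τ ^ (-d)) x := by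
  have hkernel : ∫ τ in Ioi 1, τ ^ (1 - d) * ibpKernel p (τ ^ (-d)) x =
        (x ^ p) ^ 2 * (x⁻¹ - 1) *
        ∫ τ in Ioi 1, τ ^ (1 - d) * (1 + (x⁻¹ - 1) * τ ^ (-d)) ^ (p - 1) := by
    rw [← integral_const_mul]
    refine setIntegral_congr_fun measurableSet_Ioi fun τ (hτ : 1 < τ) ↦ ?_
    obtain ⟨ht0, ht1⟩ := rpow_neg_mem_Ioc (d := d) (by linarith) hτ.le
    rw [← sq_rpow_mul_inv_sub_one_mul_rpow_eq_ibpKernel hx (add_one_sub_mul_pos hx ht0.le ht1).le]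
    ring
  rw [integral_mul_one_add_mul_rpow_neg_rpow_sub_one hd (by linarith [inv_pos.2 hx]) hp0 hp1,
    hkernel, add_sub_cancel, Real.inv_rpow hx.le]
  have : x ^ p ≠ 0 := (Real.rpow_pos_of_pos hx p).ne'
  field_simp
  ring

lemma sq_mul_neg_half_add_integral_eq {k : ℕ} {r : ℝ} (hd : 2 < d) (hk : 1 ≤ k) (hr : 0 < r) :
    r ^ 2 * (-(1 / 2) + ∫ τ in Ioi 1, τ * ((1 + ((r ^ k)⁻¹ - 1) * τ ^ (-d)) ^ ((1 : ℝ) / k) - 1)) =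
      -(r / 2) + d * (1 / k) / 2 *
        ∫ τ in Ioi 1, τ ^ (1 - d) * ibpKernel (1 / k) (τ ^ (-d)) (r ^ k) := by
  have hroot : (r ^ k) ^ ((1 : ℝ) / k) = r := by
    rw [one_div]; exact Real.pow_rpow_inv_natCast hr.le (by omega)
  have h := sq_rpow_mul_neg_half_add_integral_eq (p := 1 / k) hd (by positivity)
    (div_le_one_of_le₀ (by exact_mod_cast hk) (by positivity)) (pow_pos hr k)
  rwa [hroot] at h

lemma antitoneOn_integral_rpow_one_sub_mul_ibpKernel_pow {k : ℕ} (hd : 2 < d) (hk : 1 ≤ k)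
    (hkd : k + 1 ≤ d) :
    AntitoneOn (fun r ↦ ∫ τ in Ioi 1, τ ^ (1 - d) * ibpKernel (1 / k) (τ ^ (-d)) (r ^ k))
      (Ici (((d - k) / d) ^ ((1 : ℝ) / k))) := by
  have hk0 : (0 : ℝ) < k := by exact_mod_cast hk
  have hk1 : (1 : ℝ) ≤ k := by exact_mod_cast hk
  have hx₀ : 0 < (d - k) / d := div_pos (by linarith) (by linarith)
  have hslope : 1 / k * (1 - (d - k) / d) = 1 / d := by
    have : d ≠ 0 := by linarith
    field_simp
    ring
  have hG := antitoneOn_integral_rpow_one_sub_mul_ibpKernel hd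
    (by positivity) (div_le_one_of_le₀ hk1 hk0.le) (x₀ := (d - k) / d)
    (by rw [hslope]; exact div_le_div_of_nonneg_right (by linarith) (by linarith))
    (by rw [mul_assoc, hslope, mul_one_div, div_le_one (by linarith)]; linarith)
  have hroot : (((d - k) / d) ^ ((1 : ℝ) / k)) ^ k = (d - k) / d := by
    rw [one_div]; exact Real.rpow_inv_natCast_pow hx₀.le (by omega)
  have hpow : ∀ {r : ℝ}, r ∈ Ici (((d - k) / d) ^ ((1 : ℝ) / k)) → r ^ k ∈ Ici ((d - k) / d) :=
    fun hr ↦ hroot ▸ pow_le_pow_left₀ (Real.rpow_nonneg hx₀.le _) hr k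
  intro r hr s hs hrs
  exact hG (hpow hr) (hpow hs) (pow_le_pow_left₀ ((Real.rpow_nonneg hx₀.le _).trans hr) hrs k)

end Kernel

lemma tendsto_atBot_add_of_antitoneOn {f g : ℝ → ℝ} {a : ℝ} (hf : Tendsto f atTop atBot)
    (hg : AntitoneOn g (Ici a)) : Tendsto (fun r ↦ f r + g r) atTop atBot :=
  tendsto_atBot_mono' atTop ((eventually_ge_atTop a).mono fun _ hr ↦
    add_le_add_right (hg self_mem_Ici hr hr) _) (tendsto_atBot_add_const_right _ (g a) hf)

theorem stmt18 (d k : ℕ) (hd : 3 ≤ d) (hk1 : 1 ≤ k) (hk2 : k ≤ d - 1)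
    (r2 : ℝ) (hr2 : r2 = (((d : ℝ) - k) / d) ^ ((1 : ℝ) / k))
    (μ : ℝ → ℝ)
    (hμ : ∀ r0 : ℝ, 0 < r0 →
      μ r0 = r0 ^ 2 * (-(1 / 2) +
        ∫ τ in Set.Ioi (1 : ℝ),
          τ * ((1 + ((r0 ^ k)⁻¹ - 1) * τ ^ (-(d : ℝ))) ^ ((1 : ℝ) / k) - 1))) :
    StrictAntiOn μ (Set.Ioi r2) ∧
    Filter.Tendsto μ Filter.atTop Filter.atBot ∧
    (∀ r0, r2 < r0 → μ r0 < μ r2) ∧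
    μ r2 = (((d : ℝ) - k) / d) ^ ((2 : ℝ) / k) *
      (-(1 / 2) + ∫ τ in Set.Ioi (1 : ℝ),
        τ * ((1 + ((k : ℝ) / ((d : ℝ) - k)) * τ ^ (-(d : ℝ))) ^ ((1 : ℝ) / k) - 1)) := by
  have hkd : (k : ℝ) + 1 ≤ d := by exact_mod_cast (by omega : k + 1 ≤ d)
  have hd2 : (2 : ℝ) < d := by exact_mod_cast (by omega : 2 < d)
  have hx₀ : 0 < ((d : ℝ) - k) / d := div_pos (by linarith) (by linarith)
  have hr2pos : 0 < r2 := by rw [hr2]; positivity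
  set G := fun r ↦ ∫ τ in Ioi 1, τ ^ (1 - (d : ℝ)) * ibpKernel (1 / k) (τ ^ (-(d : ℝ))) (r ^ k)
  have hCG : AntitoneOn (fun r ↦ d * (1 / k) / 2 * G r) (Ici r2) := fun r hr s hs hrs ↦
    mul_le_mul_of_nonneg_left
      ((hr2 ▸ antitoneOn_integral_rpow_one_sub_mul_ibpKernel_pow hd2 hk1 hkd) hr hs hrs)
      (by positivity)
  have hμG : EqOn (fun r ↦ -(r / 2) + d * (1 / k) / 2 * G r) μ (Ioi 0) := fun r (hr : 0 < r) ↦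
    (hμ r hr ▸ sq_mul_neg_half_add_integral_eq hd2 hk1 hr).symm
  have hanti : StrictAntiOn μ (Ici r2) :=
    (((strictMono_id.div_const two_pos).neg.strictAntiOn _).add_antitone hCG).congr
      (hμG.mono fun r hr ↦ hr2pos.trans_le hr)
  refine ⟨hanti.mono Ioi_subset_Ici_self, ?_, fun r hr ↦ hanti self_mem_Ici hr.le hr, ?_⟩
  · exact (tendsto_atBot_add_of_antitoneOn
      (tendsto_neg_atTop_atBot.comp (tendsto_id.atTop_div_const two_pos)) hCG).congr'
      (eventually_gt_atTop 0 |>.mono fun r hr ↦ hμG hr)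
  · have hr2k : r2 ^ k = ((d : ℝ) - k) / d := by
      rw [hr2, one_div]; exact Real.rpow_inv_natCast_pow hx₀.le (by omega)
    have hc2 : (r2 ^ k)⁻¹ - 1 = (k : ℝ) / ((d : ℝ) - k) := by
      have : (d : ℝ) - k ≠ 0 := by linarith
      rw [hr2k]; field_simp; ring
    have hsq : r2 ^ 2 = (((d : ℝ) - k) / d) ^ ((2 : ℝ) / k) := by
      rw [hr2, ← Real.rpow_natCast, ← Real.rpow_mul hx₀.le]
      congr 1
      push_cast
      ring
    rw [hμ r2 hr2pos, hc2, hsq]
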